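/- arXiv:2410.06531 — 5 statements merged into one kernel-verified Lean document; each statement's English description precedes it below -/
import Mathlib

section
/- Let G and G' be finite simple graphs without isolated vertices, and let ψ : E(G) → E(G') be an edge isomorphism. Then ψ is induced by a graph isomorphism G → G' if and only if ψ does not have a K3,K1,3-pair. -/
open SimpleGraph

/-- Two edges (elements of `Sym2 V`) share an endpoint. -/
def SharesEndpoint {V : Type*} (e f : Sym2 V) : Prop := ∃ v, v ∈ e ∧ v ∈ f

/-- `ψ` is an edge isomorphism: a bijection of edge sets such that two edges share an
endpoint iff their images share an endpoint. -/
def IsEdgeIsom {V V' : Type*} (G : SimpleGraph V) (G' : SimpleGraph V')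
    (ψ : G.edgeSet ≃ G'.edgeSet) : Prop :=
  ∀ e f : G.edgeSet, SharesEndpoint (e : Sym2 V) (f : Sym2 V) ↔
    SharesEndpoint (ψ e : Sym2 V') (ψ f : Sym2 V')

/-- A set of edges spans a triangle `K₃`. -/
def IsTriangleEdgeSet {V : Type*} (s : Set (Sym2 V)) : Prop :=
  ∃ a b c : V, a ≠ b ∧ a ≠ c ∧ b ≠ c ∧ s = {s(a, b), s(b, c), s(a, c)}

/-- A set of edges spans a 3-star `K_{1,3}` with center `c`. -/
def IsThreeStarEdgeSet {V : Type*} (s : Set (Sym2 V)) : Prop :=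
  ∃ c a b d : V, a ≠ b ∧ a ≠ d ∧ b ≠ d ∧ c ≠ a ∧ c ≠ b ∧ c ≠ d ∧
    s = {s(c, a), s(c, b), s(c, d)}

/-- `ψ` has a `K₃, K_{1,3}`-pair: a set `η` of edges of `G` such that the subgraph spanned
by `η` and the subgraph spanned by `ψ(η)` are a triangle and a 3-star, in either order. -/
def HasK3K13Pair {V V' : Type*} (G : SimpleGraph V) (G' : SimpleGraph V')
    (ψ : G.edgeSet ≃ G'.edgeSet) : Prop :=
  ∃ η : Set G.edgeSet,
    (IsTriangleEdgeSet ((fun e : G.edgeSet => (e : Sym2 V)) '' η) ∧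
      IsThreeStarEdgeSet ((fun e : G'.edgeSet => (e : Sym2 V')) '' (ψ '' η))) ∨
    (IsThreeStarEdgeSet ((fun e : G.edgeSet => (e : Sym2 V)) '' η) ∧
      IsTriangleEdgeSet ((fun e : G'.edgeSet => (e : Sym2 V')) '' (ψ '' η)))

/-- `ψ` is induced by the graph isomorphism `φ`. -/
def InducedByIso {V V' : Type*} (G : SimpleGraph V) (G' : SimpleGraph V')
    (ψ : G.edgeSet ≃ G'.edgeSet) (φ : G ≃g G') : Prop :=
  ∀ e : G.edgeSet, (ψ e : Sym2 V') = Sym2.map (⇑φ) (e : Sym2 V)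

/-!
Call `w` a centre of `v` if `w` lies on `ψ f` for every edge `f` at `v`. Three distinct, pairwise
adjacent edges either share a vertex (a star) or span a triangle, and without a `K₃, K_{1,3}`-pair
`ψ` preserves which of the two occurs. Hence the images of all edges at `v` pass through a common
vertex, and the two ends of an edge whose ends both have further edges get different centres.
Labelling every edge `{a, b}` compatibly with these centres glues to a vertex map `φ` inducing `ψ`.
Doing the same for `ψ⁻¹` gives `φ'`, and `φ' ∘ φ`, `φ ∘ φ'` fix every edge setwise, so without
isolated vertices they are involutions; thus `φ` is a bijection, and it maps edges onto edges.
-/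

namespace Sym2

variable {α : Type*}

theorem eq_of_mem_of_mem_of_ne {x y : α} {z z' : Sym2 α} (hne : z ≠ z') (hx : x ∈ z)
    (hx' : x ∈ z') (hy : y ∈ z) (hy' : y ∈ z') : x = y :=
  by_contra fun hxy => hne (eq_of_ne_mem hxy hx hy hx' hy')

theorem exists_eq_mk_of_mem {z : Sym2 α} {x₀ y₀ : α} {P Q : Prop} (hx : x₀ ∈ z) (hy : y₀ ∈ z)
    (hne : P → Q → x₀ ≠ y₀) : ∃ x y, z = s(x, y) ∧ (P → x = x₀) ∧ (Q → y = y₀) := by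
  by_cases hP : P
  · refine ⟨x₀, Mem.other hx, (other_spec hx).symm, fun _ => rfl, fun hQ => ?_⟩
    rw [← other_spec hx, mem_iff] at hy
    exact (hy.resolve_left (hne hP hQ).symm).symm
  · exact ⟨Mem.other hy, y₀, (other_spec hy).symm.trans eq_swap, hP.elim, fun _ => rfl⟩

theorem not_exists_mem_of_mem {a b : α} {e f g : Sym2 α} (hab : a ≠ b) (hae : a ∈ e)
    (hbe : b ∈ e) (haf : a ∈ f) (hfe : f ≠ e) (hbg : b ∈ g) (hge : g ≠ e) :
    ¬ ∃ v, v ∈ e ∧ v ∈ f ∧ v ∈ g := by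
  rintro ⟨v, hve, hvf, hvg⟩
  exact hab ((eq_of_mem_of_mem_of_ne hfe haf hae hvf hve).trans
    (eq_of_mem_of_mem_of_ne hge hvg hve hbg hbe))

end Sym2

section EdgeConfigurations

variable {V V' : Type*}

theorem isTriangleEdgeSet_of_sharesEndpoint {e f g : Sym2 V} (hef : SharesEndpoint e f)
    (heg : SharesEndpoint e g) (hfg : SharesEndpoint f g)
    (hno : ¬ ∃ v, v ∈ e ∧ v ∈ f ∧ v ∈ g) : IsTriangleEdgeSet {e, f, g} := by
  obtain ⟨p, hpe, hpf⟩ := hef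
  obtain ⟨q, hqe, hqg⟩ := heg
  obtain ⟨r, hrf, hrg⟩ := hfg
  have hpq : p ≠ q := by rintro rfl; exact hno ⟨p, hpe, hpf, hqg⟩
  have hpr : p ≠ r := by rintro rfl; exact hno ⟨p, hpe, hpf, hrg⟩
  have hqr : q ≠ r := by rintro rfl; exact hno ⟨q, hqe, hrf, hqg⟩
  refine ⟨p, q, r, hpq, hpr, hqr, ?_⟩
  rw [(Sym2.mem_and_mem_iff hpq).mp ⟨hpe, hqe⟩, (Sym2.mem_and_mem_iff hpr).mp ⟨hpf, hrf⟩,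
    (Sym2.mem_and_mem_iff hqr).mp ⟨hqg, hrg⟩, Set.pair_comm]

theorem isThreeStarEdgeSet_of_mem {v : V} {e f g : Sym2 V} (he : ¬ e.IsDiag) (hf : ¬ f.IsDiag)
    (hg : ¬ g.IsDiag) (hef : e ≠ f) (heg : e ≠ g) (hfg : f ≠ g) (hve : v ∈ e) (hvf : v ∈ f)
    (hvg : v ∈ g) : IsThreeStarEdgeSet {e, f, g} := by
  obtain ⟨a, rfl⟩ : ∃ a, e = s(v, a) := ⟨_, (Sym2.other_spec hve).symm⟩
  obtain ⟨b, rfl⟩ : ∃ b, f = s(v, b) := ⟨_, (Sym2.other_spec hvf).symm⟩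
  obtain ⟨d, rfl⟩ : ∃ d, g = s(v, d) := ⟨_, (Sym2.other_spec hvg).symm⟩
  rw [Sym2.mk_isDiag_iff] at he hf hg
  exact ⟨v, a, b, d, ne_of_apply_ne _ hef, ne_of_apply_ne _ heg, ne_of_apply_ne _ hfg,
    he, hf, hg, rfl⟩

theorem IsTriangleEdgeSet.image_map {f : V → V'} (hf : Function.Injective f) {s : Set (Sym2 V)}
    (h : IsTriangleEdgeSet s) : IsTriangleEdgeSet (Sym2.map f '' s) := by
  obtain ⟨a, b, c, hab, hac, hbc, rfl⟩ := h
  exact ⟨f a, f b, f c, hf.ne hab, hf.ne hac, hf.ne hbc, by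
    simp only [Set.image_insert_eq, Set.image_singleton, Sym2.map_mk]⟩

theorem IsThreeStarEdgeSet.image_map {f : V → V'} (hf : Function.Injective f)
    {s : Set (Sym2 V)} (h : IsThreeStarEdgeSet s) : IsThreeStarEdgeSet (Sym2.map f '' s) := by
  obtain ⟨c, a, b, d, h₁, h₂, h₃, h₄, h₅, h₆, rfl⟩ := h
  exact ⟨f c, f a, f b, f d, hf.ne h₁, hf.ne h₂, hf.ne h₃, hf.ne h₄, hf.ne h₅, hf.ne h₆, by
    simp only [Set.image_insert_eq, Set.image_singleton, Sym2.map_mk]⟩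

theorem IsTriangleEdgeSet.not_isThreeStarEdgeSet {s : Set (Sym2 V)} (ht : IsTriangleEdgeSet s) :
    ¬ IsThreeStarEdgeSet s := by
  obtain ⟨a, b, c, hab, hac, hbc, rfl⟩ := ht
  rintro ⟨v, x, y, z, -, -, -, -, -, -, heq⟩
  have hv : ∀ e ∈ ({s(a, b), s(b, c), s(a, c)} : Set (Sym2 V)), v ∈ e := by
    rw [heq]
    rintro e (rfl | rfl | rfl) <;> simp
  simp only [Set.mem_insert_iff, Set.mem_singleton_iff, forall_eq_or_imp, forall_eq,
    Sym2.mem_iff] at hv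
  grind

theorem involutive_of_map_eq_self {H : SimpleGraph V} (hH : ∀ v : V, ∃ w, H.Adj v w)
    {g : V → V} (hg : ∀ e : H.edgeSet, Sym2.map g e = e) : Function.Involutive g := by
  intro v
  obtain ⟨w, hvw⟩ := hH v
  have hfix := hg ⟨s(v, w), hvw⟩
  rw [Sym2.map_mk, Sym2.eq_iff] at hfix
  rcases hfix with ⟨hv, -⟩ | ⟨hv, hw⟩
  · rw [hv, hv]
  · rw [hv, hw]

end EdgeConfigurations

section EdgeIsomorphisms

variable {V V' : Type*} {G : SimpleGraph V} {G' : SimpleGraph V'} {ψ : G.edgeSet ≃ G'.edgeSet}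

theorem HasK3K13Pair.of_symm (h : HasK3K13Pair G' G ψ.symm) : HasK3K13Pair G G' ψ := by
  obtain ⟨η, hη⟩ := h
  refine ⟨ψ.symm '' η, ?_⟩
  rw [ψ.image_symm_image]
  exact hη.symm.imp And.symm And.symm

theorem not_hasK3K13Pair_of_inducedByIso {Φ : G ≃g G'} (hΦ : InducedByIso G G' ψ Φ) :
    ¬ HasK3K13Pair G G' ψ := by
  rintro ⟨η, hη⟩
  have himage : (fun e : G'.edgeSet => (e : Sym2 V')) '' (ψ '' η) =
      Sym2.map Φ '' ((fun e : G.edgeSet => (e : Sym2 V)) '' η) := by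
    rw [Set.image_image, Set.image_image]
    exact Set.image_congr fun e _ => hΦ e
  rw [himage] at hη
  rcases hη with ⟨ht, hs⟩ | ⟨hs, ht⟩
  · exact (ht.image_map Φ.injective).not_isThreeStarEdgeSet hs
  · exact ht.not_isThreeStarEdgeSet (hs.image_map Φ.injective)

theorem bijective_of_map_eq {φ : V → V'} {φ' : V' → V} (hG : ∀ v : V, ∃ w, G.Adj v w)
    (hG' : ∀ v : V', ∃ w, G'.Adj v w)
    (hφ : ∀ e : G.edgeSet, (ψ e : Sym2 V') = Sym2.map φ e)
    (hφ' : ∀ e : G'.edgeSet, (ψ.symm e : Sym2 V) = Sym2.map φ' e) :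
    Function.Bijective φ := by
  have hinv : Function.Involutive (φ' ∘ φ) := involutive_of_map_eq_self hG fun e => by
    rw [← Sym2.map_map, ← hφ e, ← hφ' (ψ e), ψ.symm_apply_apply]
  have hinv' : Function.Involutive (φ ∘ φ') := involutive_of_map_eq_self hG' fun e => by
    rw [← Sym2.map_map, ← hφ' e, ← hφ (ψ.symm e), ψ.apply_symm_apply]
  exact ⟨hinv.injective.of_comp, hinv'.surjective.of_comp⟩

theorem exists_inducedByIso_of_bijective {φ : V → V'} (hbij : Function.Bijective φ)
    (hφ : ∀ e : G.edgeSet, (ψ e : Sym2 V') = Sym2.map φ e) :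
    ∃ Φ : G ≃g G', InducedByIso G G' ψ Φ := by
  have hedges : G'.edgeSet = Sym2.map φ '' G.edgeSet := by
    ext z
    refine ⟨fun hz => ⟨ψ.symm ⟨z, hz⟩, (ψ.symm _).2, ?_⟩, ?_⟩
    · rw [← hφ, ψ.apply_symm_apply]
    · rintro ⟨e, he, rfl⟩
      exact hφ ⟨e, he⟩ ▸ (ψ ⟨e, he⟩).2
  refine ⟨⟨Equiv.ofBijective φ hbij, fun {a b} => ?_⟩, hφ⟩
  rw [Equiv.ofBijective_apply, Equiv.ofBijective_apply, ← mem_edgeSet, hedges,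
    ← Sym2.map_mk, (Sym2.map.injective hbij.injective).mem_set_image, mem_edgeSet]

namespace IsEdgeIsom

variable (hψ : IsEdgeIsom G G' ψ) (hno : ¬ HasK3K13Pair G G' ψ)
include hψ

theorem symm : IsEdgeIsom G' G ψ.symm := fun e f => by
  simpa using (hψ (ψ.symm e) (ψ.symm f)).symm

include hno

theorem exists_common_iff {e f g : G.edgeSet} (hef : e ≠ f) (heg : e ≠ g) (hfg : f ≠ g)
    (hsef : SharesEndpoint (e : Sym2 V) f) (hseg : SharesEndpoint (e : Sym2 V) g)
    (hsfg : SharesEndpoint (f : Sym2 V) g) :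
    (∃ v, v ∈ (e : Sym2 V) ∧ v ∈ (f : Sym2 V) ∧ v ∈ (g : Sym2 V)) ↔
      ∃ w, w ∈ (ψ e : Sym2 V') ∧ w ∈ (ψ f : Sym2 V') ∧ w ∈ (ψ g : Sym2 V') := by
  have himage : (fun e : G.edgeSet => (e : Sym2 V)) '' {e, f, g} = {↑e, ↑f, ↑g} := by
    simp only [Set.image_insert_eq, Set.image_singleton]
  have himage' : (fun e : G'.edgeSet => (e : Sym2 V')) '' (ψ '' {e, f, g}) =
      {↑(ψ e), ↑(ψ f), ↑(ψ g)} := by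
    simp only [Set.image_insert_eq, Set.image_singleton]
  have hdiag (e : G.edgeSet) : ¬ (e : Sym2 V).IsDiag := G.not_isDiag_of_mem_edgeSet e.2
  have hdiag' (e : G'.edgeSet) : ¬ (e : Sym2 V').IsDiag := G'.not_isDiag_of_mem_edgeSet e.2
  have hne {e f : G.edgeSet} (h : e ≠ f) : (ψ e : Sym2 V') ≠ ψ f :=
    Subtype.coe_injective.ne (ψ.injective.ne h)
  constructor
  · rintro ⟨v, hve, hvf, hvg⟩
    by_contra hw
    refine hno ⟨{e, f, g}, Or.inr ⟨?_, ?_⟩⟩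
    · rw [himage]
      exact isThreeStarEdgeSet_of_mem (hdiag e) (hdiag f) (hdiag g)
        (Subtype.coe_injective.ne hef) (Subtype.coe_injective.ne heg)
        (Subtype.coe_injective.ne hfg) hve hvf hvg
    · rw [himage']
      exact isTriangleEdgeSet_of_sharesEndpoint ((hψ e f).1 hsef) ((hψ e g).1 hseg)
        ((hψ f g).1 hsfg) hw
  · rintro ⟨w, hwe, hwf, hwg⟩
    by_contra hv
    refine hno ⟨{e, f, g}, Or.inl ⟨?_, ?_⟩⟩
    · rw [himage]
      exact isTriangleEdgeSet_of_sharesEndpoint hsef hseg hsfg hv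
    · rw [himage']
      exact isThreeStarEdgeSet_of_mem (hdiag' _) (hdiag' _) (hdiag' _) (hne hef) (hne heg)
        (hne hfg) hwe hwf hwg

theorem exists_center {v : V} {e : G.edgeSet} (hve : v ∈ (e : Sym2 V)) :
    ∃ w, ∀ f : G.edgeSet, v ∈ (f : Sym2 V) → w ∈ (ψ f : Sym2 V') := by
  by_cases hsecond : ∃ g : G.edgeSet, v ∈ (g : Sym2 V) ∧ g ≠ e
  · obtain ⟨g, hvg, hge⟩ := hsecond
    obtain ⟨w, hwe, hwg⟩ := (hψ e g).1 ⟨v, hve, hvg⟩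
    refine ⟨w, fun f hvf => ?_⟩
    obtain rfl | hfe := eq_or_ne f e
    · exact hwe
    obtain rfl | hfg := eq_or_ne f g
    · exact hwg
    obtain ⟨u, hue, hug, huf⟩ := (hψ.exists_common_iff hno hge.symm hfe.symm hfg.symm
      ⟨v, hve, hvg⟩ ⟨v, hve, hvf⟩ ⟨v, hvg, hvf⟩).1 ⟨v, hve, hvg, hvf⟩
    have hne : (ψ e : Sym2 V') ≠ ψ g := Subtype.coe_injective.ne (ψ.injective.ne hge.symm)
    rwa [Sym2.eq_of_mem_of_mem_of_ne hne hwe hwg hue hug]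
  · push Not at hsecond
    exact ⟨_, fun f hvf => by rw [hsecond f hvf]; exact Sym2.out_fst_mem _⟩

theorem not_exists_common_image {a b : V} (hab : a ≠ b) {e f g : G.edgeSet}
    (hae : a ∈ (e : Sym2 V)) (hbe : b ∈ (e : Sym2 V)) (haf : a ∈ (f : Sym2 V)) (hfe : f ≠ e)
    (hbg : b ∈ (g : Sym2 V)) (hge : g ≠ e) :
    ¬ ∃ w, w ∈ (ψ e : Sym2 V') ∧ w ∈ (ψ f : Sym2 V') ∧ w ∈ (ψ g : Sym2 V') := by
  rintro ⟨w, hwe, hwf, hwg⟩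
  have hfg : f ≠ g := by
    rintro rfl
    exact hfe (Subtype.ext (Sym2.eq_of_ne_mem hab haf hbg hae hbe))
  have hsfg : SharesEndpoint (f : Sym2 V) g := (hψ f g).2 ⟨w, hwf, hwg⟩
  exact Sym2.not_exists_mem_of_mem hab hae hbe haf (Subtype.coe_injective.ne hfe) hbg
    (Subtype.coe_injective.ne hge) ((hψ.exists_common_iff hno hfe.symm hge.symm hfg
      ⟨a, hae, haf⟩ ⟨b, hbe, hbg⟩ hsfg).2 ⟨w, hwe, hwf, hwg⟩)

theorem exists_local_labeling {c : V → V'}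
    (hc : ∀ (v : V) (f : G.edgeSet), v ∈ (f : Sym2 V) → c v ∈ (ψ f : Sym2 V'))
    (e : G.edgeSet) :
    ∃ τ : V → V', Sym2.map τ e = ψ e ∧
      ∀ v ∈ (e : Sym2 V), ∀ f : G.edgeSet, v ∈ (f : Sym2 V) → f ≠ e → τ v = c v := by
  classical
  obtain ⟨a, b, hab⟩ : ∃ a b, (e : Sym2 V) = s(a, b) := ⟨_, _, (Quot.out_eq _).symm⟩
  have hne : a ≠ b := (G.mem_edgeSet.mp (hab ▸ e.2)).ne
  have hae : a ∈ (e : Sym2 V) := hab ▸ Sym2.mem_mk_left a b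
  have hbe : b ∈ (e : Sym2 V) := hab ▸ Sym2.mem_mk_right a b
  obtain ⟨x, y, hxy, hx, hy⟩ := Sym2.exists_eq_mk_of_mem (hc a e hae) (hc b e hbe)
    (P := ∃ f : G.edgeSet, a ∈ (f : Sym2 V) ∧ f ≠ e)
    (Q := ∃ g : G.edgeSet, b ∈ (g : Sym2 V) ∧ g ≠ e) fun ⟨f, haf, hfe⟩ ⟨g, hbg, hge⟩ hcab =>
      hψ.not_exists_common_image hno hne hae hbe haf hfe hbg hge
        ⟨c a, hc a e hae, hc a f haf, hcab ▸ hc b g hbg⟩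
  refine ⟨fun v => if v = a then x else y, ?_, fun v hv f hvf hfe => ?_⟩
  · rw [hab, hxy, Sym2.map_mk, if_pos rfl, if_neg hne.symm]
  · rw [hab, Sym2.mem_iff] at hv
    rcases hv with rfl | rfl
    · exact (if_pos rfl).trans (hx ⟨f, hvf, hfe⟩)
    · exact (if_neg hne.symm).trans (hy ⟨f, hvf, hfe⟩)

theorem exists_map_eq (hG : ∀ v : V, ∃ w, G.Adj v w) :
    ∃ φ : V → V', ∀ e : G.edgeSet, (ψ e : Sym2 V') = Sym2.map φ e := by
  have hedge (v : V) : ∃ e : G.edgeSet, v ∈ (e : Sym2 V) :=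
    let ⟨w, hw⟩ := hG v
    ⟨⟨s(v, w), hw⟩, Sym2.mem_mk_left v w⟩
  choose ε hε using hedge
  choose c hc using fun v => hψ.exists_center hno (hε v)
  choose τ hτ hτc using hψ.exists_local_labeling hno hc
  refine ⟨fun v => τ (ε v) v, fun e => (hτ e).symm.trans (Sym2.map_congr fun v hv => ?_)⟩
  -- a vertex on two different edges gets the label `c v` from both
  obtain h | h := eq_or_ne (ε v) e
  · rw [h]
  · rw [hτc e v hv (ε v) (hε v) h, hτc (ε v) v (hε v) e hv h.symm]

end IsEdgeIsom

end EdgeIsomorphisms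

theorem whitney_finite_general {V V' : Type*}
    (G : SimpleGraph V) (G' : SimpleGraph V')
    (hG : ∀ v : V, ∃ w, G.Adj v w) (hG' : ∀ v : V', ∃ w, G'.Adj v w)
    (ψ : G.edgeSet ≃ G'.edgeSet) (hψ : IsEdgeIsom G G' ψ) :
    (∃ φ : G ≃g G', InducedByIso G G' ψ φ) ↔ ¬ HasK3K13Pair G G' ψ := by
  refine ⟨fun ⟨Φ, hΦ⟩ => not_hasK3K13Pair_of_inducedByIso hΦ, fun hno => ?_⟩
  obtain ⟨φ, hφ⟩ := hψ.exists_map_eq hno hG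
  obtain ⟨φ', hφ'⟩ := hψ.symm.exists_map_eq (fun h => hno h.of_symm) hG'
  exact exists_inducedByIso_of_bijective (bijective_of_map_eq hG hG' hφ hφ') hφ

/-- Whitney's theorem (Gardner's version): an edge isomorphism between finite simple graphs
without isolated vertices is induced by a graph isomorphism iff it has no `K₃,K_{1,3}`-pair. -/
theorem whitney_finite {V V' : Type*} [Fintype V] [Fintype V']
    (G : SimpleGraph V) (G' : SimpleGraph V')
    (hG : ∀ v : V, ∃ w, G.Adj v w) (hG' : ∀ v : V', ∃ w, G'.Adj v w)
    (ψ : G.edgeSet ≃ G'.edgeSet) (hψ : IsEdgeIsom G G' ψ) :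
    (∃ φ : G ≃g G', InducedByIso G G' ψ φ) ↔ ¬ HasK3K13Pair G G' ψ :=
  whitney_finite_general G G' hG hG' ψ hψ
end

section
/- Let G and G' be simple graphs with G connected and having at least 3 vertices. If φ and φ' are graph isomorphisms G → G' such that for every edge {u,v} of G one has {φ(u), φ(v)} = {φ'(u), φ'(v)} (i.e., φ and φ' induce the same bijection on edge sets), then φ = φ'. -/
open SimpleGraph

/-- A connected simple graph with at least 3 vertices admits at most one isomorphism
inducing a given bijection on edge sets. -/
theorem iso_unique_from_edge_map {V V' : Type*}
    (G : SimpleGraph V) (G' : SimpleGraph V')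
    (hconn : G.Connected) (h3 : ∃ f : Fin 3 → V, Function.Injective f)
    (φ φ' : G ≃g G')
    (h : ∀ u v : V, G.Adj u v → s(φ u, φ v) = s(φ' u, φ' v)) :
    φ = φ' := by
  by_contra hne
  have hex : ∃ x, φ x ≠ φ' x := by
    by_contra hall
    push_neg at hall
    exact hne (RelIso.ext hall)
  obtain ⟨x, hx⟩ := hex
  have key : ∀ z, G.Adj x z → φ x = φ' z ∧ φ z = φ' x := by
    intro z hz
    have hs := h x z hz
    rw [Sym2.eq_iff] at hs
    rcases hs with ⟨h1, _⟩ | h2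
    · exact absurd h1 hx
    · exact h2
  obtain ⟨f, hf⟩ := h3
  have hxv : ∃ v, v ≠ x := by
    rcases eq_or_ne (f 0) x with h0 | h0
    · exact ⟨f 1, fun hh => absurd (hf (hh.trans h0.symm)) (by decide)⟩
    · exact ⟨f 0, h0⟩
  obtain ⟨v, hvx⟩ := hxv
  obtain ⟨p⟩ := hconn x v
  obtain ⟨y, hxy⟩ : ∃ y, G.Adj x y := by
    cases p with
    | nil => exact absurd rfl hvx
    | cons h' _ => exact ⟨_, h'⟩
  obtain ⟨hxy1, hxy2⟩ := key y hxy
  have hy : φ y ≠ φ' y := by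
    intro hh
    exact hxy.ne (φ'.injective (hxy2.symm.trans hh))
  have key' : ∀ z, G.Adj y z → φ y = φ' z ∧ φ z = φ' y := by
    intro z hz
    have hs := h y z hz
    rw [Sym2.eq_iff] at hs
    rcases hs with ⟨h1, _⟩ | h2
    · exact absurd h1 hy
    · exact h2
  have nx : ∀ z, G.Adj x z → z = y := by
    intro z hz
    exact φ'.injective ((key z hz).1.symm.trans hxy1)
  have ny : ∀ z, G.Adj y z → z = x := by
    intro z hz
    exact φ.injective ((key' z hz).2.trans hxy1.symm)
  have walkclaim : ∀ (a w : V) (p : G.Walk a w), (a = x ∨ a = y) → (w = x ∨ w = y) := by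
    intro a w p
    induction p with
    | nil => exact id
    | cons h' p ih =>
      intro ha
      apply ih
      rcases ha with rfl | rfl
      · exact Or.inr (nx _ h')
      · exact Or.inl (ny _ h')
  have all : ∀ w, w = x ∨ w = y := fun w => walkclaim x w (hconn x w).some (Or.inl rfl)
  rcases all (f 0) with h0 | h0 <;> rcases all (f 1) with h1 | h1 <;> rcases all (f 2) with h2 | h2 <;>
    first
    | exact absurd (hf (h0.trans h1.symm)) (by decide)
    | exact absurd (hf (h0.trans h2.symm)) (by decide)
    | exact absurd (hf (h1.trans h2.symm)) (by decide)
end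

section
/- There is no injective graph homomorphism from the complete bipartite graph K_{3,3} into the Petersen graph, and there is no injective graph homomorphism from the Petersen graph into K_{3,3}. -/
/-!
`K_{3,3}` contains a 4-cycle: its vertices `inl 0` and `inl 1` have the two common
neighbours `inr 0` and `inr 1`. In the Petersen graph two distinct vertices `s ≠ t` have at
most one common neighbour, since a 2-subset of `Fin 5` disjoint from both lies in
`(s ∪ t)ᶜ`, which has at most two elements. An injective homomorphism carries distinct common
neighbours to distinct common neighbours, so `K_{3,3}` does not embed. The other direction
is counting: the Petersen graph has `choose 5 2 = 10` vertices, `K_{3,3}` only six.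
-/

open SimpleGraph

def petersenGraph : SimpleGraph {s : Finset (Fin 5) // s.card = 2} where
  Adj s t := Disjoint s.val t.val
  symm := ⟨fun s t h => h.symm⟩
  loopless := ⟨fun s h => by
    have hs : s.val = ∅ := disjoint_self.mp h
    have := s.prop
    rw [hs] at this
    simp at this⟩

namespace SimpleGraph

variable {V W : Type*} {G : SimpleGraph V} {H : SimpleGraph W}

theorem Hom.map_mem_commonNeighbors (f : G →g H) {s t u : V}
    (hu : u ∈ G.commonNeighbors s t) : f u ∈ H.commonNeighbors (f s) (f t) :=
  ⟨f.map_adj hu.1, f.map_adj hu.2⟩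

theorem Hom.commonNeighbors_subsingleton_of_injective {f : G →g H}
    (hf : Function.Injective f) {s t : V}
    (h : (H.commonNeighbors (f s) (f t)).Subsingleton) :
    (G.commonNeighbors s t).Subsingleton :=
  fun _ hu _ hv => hf (h (f.map_mem_commonNeighbors hu) (f.map_mem_commonNeighbors hv))

end SimpleGraph

theorem Finset.eq_compl_of_disjoint_of_card_le {α : Type*} [Fintype α] [DecidableEq α]
    {s u : Finset α} (hsu : Disjoint s u) (hcard : Fintype.card α ≤ u.card + s.card) :
    u = sᶜ := by
  refine eq_of_subset_of_card_le (subset_compl_iff_disjoint_left.mpr hsu) ?_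
  rw [card_compl]
  omega

theorem Finset.card_lt_card_union_of_ne {α : Type*} [DecidableEq α] {s t : Finset α}
    (hst : s ≠ t) (hcard : s.card = t.card) : s.card < (s ∪ t).card := by
  refine card_lt_card (ssubset_iff_subset_ne.mpr ⟨subset_union_left, fun h => hst ?_⟩)
  exact (eq_of_subset_of_card_le (union_eq_left.mp h.symm) hcard.le).symm

theorem petersenGraph_commonNeighbors_subsingleton {s t : {s : Finset (Fin 5) // s.card = 2}}
    (hst : s ≠ t) : (petersenGraph.commonNeighbors s t).Subsingleton := by
  have hunion : 3 ≤ (s.val ∪ t.val).card := by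
    have := Finset.card_lt_card_union_of_ne (Subtype.val_injective.ne hst) (s.2.trans t.2.symm)
    omega
  have hcompl {u} (hu : u ∈ petersenGraph.commonNeighbors s t) : u.val = (s.val ∪ t.val)ᶜ :=
    Finset.eq_compl_of_disjoint_of_card_le (Finset.disjoint_union_left.mpr hu)
      (by simp only [Fintype.card_fin, u.2]; omega)
  exact fun u hu v hv => Subtype.ext ((hcompl hu).trans (hcompl hv).symm)

theorem completeBipartiteGraph_commonNeighbors_not_subsingleton :
    ¬ ((completeBipartiteGraph (Fin 3) (Fin 3)).commonNeighbors (.inl 0) (.inl 1)).Subsingleton :=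
  fun h => absurd (h (x := .inr 0) (by simp [mem_commonNeighbors]) (y := .inr 1)
    (by simp [mem_commonNeighbors])) (by simp)

theorem card_petersenGraph_vertices : Fintype.card {s : Finset (Fin 5) // s.card = 2} = 10 := by
  rw [Fintype.card_finset_len, Fintype.card_fin]
  rfl

/-- Neither of `K_{3,3}` and the Petersen graph embeds into the other. -/
theorem k33_petersen_no_mutual_embedding :
    (¬ ∃ f : completeBipartiteGraph (Fin 3) (Fin 3) →g petersenGraph,
      Function.Injective f) ∧
    (¬ ∃ g : petersenGraph →g completeBipartiteGraph (Fin 3) (Fin 3),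
      Function.Injective g) := by
  constructor
  · rintro ⟨f, hf⟩
    have hne : f (.inl 0) ≠ f (.inl 1) := hf.ne (by simp)
    exact completeBipartiteGraph_commonNeighbors_not_subsingleton <|
      f.commonNeighbors_subsingleton_of_injective hf <|
        petersenGraph_commonNeighbors_subsingleton hne
  · rintro ⟨g, hg⟩
    have := Fintype.card_le_of_injective g hg
    rw [card_petersenGraph_vertices, Fintype.card_sum, Fintype.card_fin] at this
    omega
end

section
/- Let G be an infinite connected simple graph in which every vertex has degree 1 or degree 3, and in which every vertex of degree 3 is adjacent to exactly one vertex of degree 1 (equivalently, to exactly two vertices of degree 3). Then G is isomorphic to the caterpillar graph L. -/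
open SimpleGraph

/-- The caterpillar graph `L`: a doubly infinite path of "spine" vertices `(n, 0)`, each
with a pendant "leg" vertex `(n, 1)` attached. -/
def caterpillar : SimpleGraph (ℤ × Fin 2) where
  Adj p q := (p.2 = 0 ∧ q.2 = 0 ∧ |p.1 - q.1| = 1) ∨
    (p.1 = q.1 ∧ ((p.2 = 0 ∧ q.2 = 1) ∨ (p.2 = 1 ∧ q.2 = 0)))
  symm := by
    constructor
    intro p q h
    rcases h with ⟨h0, h1, h2⟩ | ⟨h0, h1⟩
    · exact Or.inl ⟨h1, h0, by rw [abs_sub_comm]; exact h2⟩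
    · exact Or.inr ⟨h0.symm, by tauto⟩
  loopless := by
    constructor
    intro p h
    rcases h with ⟨_, _, h2⟩ | ⟨_, ⟨h1, h2⟩ | ⟨h1, h2⟩⟩
    · simp at h2
    · rw [h1] at h2; exact absurd h2 (by decide)
    · rw [h1] at h2; exact absurd h2 (by decide)

/-!
Every trivalent vertex (spine vertex) has exactly two trivalent neighbours, so continuing an
oriented spine edge without turning back is a permutation of the oriented spine edges; its orbit
gives a line `f : ℤ → V` whose spine neighbours at `f n` are exactly `f (n ± 1)`. Two adjacent
leaves would form a finite component, so the neighbours of a leaf are spine vertices, and the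
line together with the leaves hanging off it is closed under adjacency, hence is all of `G`. If
`f` repeated a vertex, a shortest repetition would give a finite set of spine vertices closed
under taking spine neighbours, making `G` finite. So `f` is injective, and `(n, 0) ↦ f n`,
`(n, 1) ↦ (leaf at f n)` is an isomorphism from the caterpillar.
-/

open Function Set

namespace Set

variable {α : Type*} {s : Set α} {u : α}

open Classical in
/-- The element of `s` other than `u`, when `s` has exactly two elements and contains `u`. -/
noncomputable def other (s : Set α) (u : α) : α :=
  if h : ∃ w, s \ {u} = {w} then h.choose else u

theorem sdiff_singleton_eq_other (hs : s.ncard = 2) (hu : u ∈ s) : s \ {u} = {s.other u} := by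
  have h : ∃ w, s \ {u} = {w} :=
    ncard_eq_one.mp (by rw [ncard_sdiff_singleton_of_mem hu, hs])
  rw [other, dif_pos h]
  exact h.choose_spec

theorem other_mem_sdiff (hs : s.ncard = 2) (hu : u ∈ s) : s.other u ∈ s \ {u} := by
  rw [sdiff_singleton_eq_other hs hu]
  exact mem_singleton _

theorem eq_pair_other (hs : s.ncard = 2) (hu : u ∈ s) : s = {u, s.other u} := by
  rw [← sdiff_singleton_eq_other hs hu, insert_sdiff_singleton, insert_eq_of_mem hu]

theorem other_other (hs : s.ncard = 2) (hu : u ∈ s) : s.other (s.other u) = u := by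
  have hw := other_mem_sdiff hs hu
  have hu' : u ∈ s \ {s.other u} := ⟨hu, fun h => hw.2 (mem_singleton_iff.mpr h.symm)⟩
  rw [sdiff_singleton_eq_other hs hw.1] at hu'
  exact (mem_singleton_iff.mp hu').symm

end Set

namespace SimpleGraph

variable {V : Type*} {G : SimpleGraph V}

theorem Connected.eq_univ_of_adj_mem (hG : G.Connected) {S : Set V}
    (hS : ∀ ⦃x y⦄, G.Adj x y → x ∈ S → y ∈ S) (hne : S.Nonempty) : S = univ := by
  obtain ⟨u, hu⟩ := hne
  refine eq_univ_of_forall fun v => ?_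
  induction (reachable_iff_reflTransGen u v).mp (hG u v) with
  | refl => exact hu
  | tail _ hxy ih => exact hS hxy ih

section Line

variable {S : Set V} {f : ℤ → V}

def dartsIn (G : SimpleGraph V) (S : Set V) : Set (V × V) :=
  {p | p.1 ∈ S ∧ p.2 ∈ G.neighborSet p.1 ∩ S}

noncomputable def dartsInAdvance (h2 : ∀ v ∈ S, (G.neighborSet v ∩ S).ncard = 2) :
    Equiv.Perm (G.dartsIn S) where
  toFun p := ⟨(p.1.2, (G.neighborSet p.1.2 ∩ S).other p.1.1), p.2.2.2,
    (other_mem_sdiff (h2 _ p.2.2.2) ⟨p.2.2.1.symm, p.2.1⟩).1⟩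
  invFun p :=
    have hq := (other_mem_sdiff (h2 _ p.2.1) p.2.2).1
    ⟨((G.neighborSet p.1.1 ∩ S).other p.1.2, p.1.1), hq.2, hq.1.symm, p.2.1⟩
  left_inv p := by
    ext : 2
    · exact other_other (h2 _ p.2.2.2) ⟨p.2.2.1.symm, p.2.1⟩
    · rfl
  right_inv p := by
    ext : 2
    · rfl
    · exact other_other (h2 _ p.2.1) p.2.2

structure IsLineIn (G : SimpleGraph V) (S : Set V) (f : ℤ → V) : Prop where
  mem : ∀ n, f n ∈ S
  neighborSet_inter : ∀ n, G.neighborSet (f n) ∩ S = {f (n - 1), f (n + 1)}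

theorem exists_isLineIn (h2 : ∀ v ∈ S, (G.neighborSet v ∩ S).ncard = 2) (hS : S.Nonempty) :
    ∃ f, G.IsLineIn S f := by
  obtain ⟨v, hv⟩ := hS
  obtain ⟨w, hw⟩ := nonempty_of_ncard_ne_zero (s := G.neighborSet v ∩ S) (by rw [h2 v hv]; simp)
  let d : ℤ → G.dartsIn S := fun n => (dartsInAdvance h2 ^ n) ⟨(v, w), hv, hw⟩
  have hsucc (n : ℤ) :
      (d (n + 1)).1 = ((d n).1.2, (G.neighborSet (d n).1.2 ∩ S).other (d n).1.1) := by
    simp only [d, add_comm n 1, zpow_one_add, Equiv.Perm.mul_apply]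
    rfl
  refine ⟨fun n => (d n).1.1, fun n => (d n).2.1, fun n => ?_⟩
  obtain ⟨m, rfl⟩ : ∃ m, n = m + 1 := ⟨n - 1, by ring⟩
  have hm := (d m).2
  simp only [add_sub_cancel_right, hsucc]
  exact eq_pair_other (h2 _ hm.2.2) ⟨hm.2.1.symm, hm.1⟩

theorem IsLineIn.succ_mem (hf : G.IsLineIn S f) (n : ℤ) :
    f (n + 1) ∈ G.neighborSet (f n) ∩ S := by
  rw [hf.neighborSet_inter]
  exact mem_insert_of_mem _ rfl

theorem IsLineIn.pred_mem (hf : G.IsLineIn S f) (n : ℤ) :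
    f (n - 1) ∈ G.neighborSet (f n) ∩ S := by
  rw [hf.neighborSet_inter]
  exact mem_insert _ _

theorem IsLineIn.pred_ne_succ (h2 : ∀ v ∈ S, (G.neighborSet v ∩ S).ncard = 2)
    (hf : G.IsLineIn S f) (n : ℤ) : f (n - 1) ≠ f (n + 1) := by
  intro h
  have h2n := h2 _ (hf.mem n)
  rw [hf.neighborSet_inter, h, pair_eq_singleton, ncard_singleton] at h2n
  exact absurd h2n (by norm_num)

theorem IsLineIn.adj_iff (hf : G.IsLineIn S f) (hinj : Injective f) {m n : ℤ} :
    G.Adj (f m) (f n) ↔ |m - n| = 1 := by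
  constructor
  · intro h
    have hn : f n ∈ ({f (m - 1), f (m + 1)} : Set V) := hf.neighborSet_inter m ▸ ⟨h, hf.mem n⟩
    rcases hn with hn | hn <;> rw [hinj hn] <;> norm_num
  · intro h
    rcases abs_eq zero_le_one |>.mp h with h | h
    · obtain rfl : n = m - 1 := by omega
      exact (hf.pred_mem m).1
    · obtain rfl : n = m + 1 := by omega
      exact (hf.succ_mem m).1

theorem IsLineIn.range_subset_of_closed (hf : G.IsLineIn S f) {R : Set V}
    (hR : ∀ x ∈ R, G.neighborSet x ∩ S ⊆ R) {p : ℤ} (hp : f p ∈ R) : range f ⊆ R := by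
  rintro _ ⟨n, rfl⟩
  exact Int.inductionOn' n p hp (fun k _ hk => hR _ hk (hf.succ_mem k))
    (fun k _ hk => hR _ hk (hf.pred_mem k))

theorem IsLineIn.finite_range_of_eq_of_pred_eq (hf : G.IsLineIn S f) {p q : ℤ} (hpq : p < q)
    (hp : f p = f q) (hpred : f (q - 1) = f (p - 1)) : (range f).Finite := by
  refine ((finite_Ico p q).image f).subset (hf.range_subset_of_closed ?_ ⟨p, ⟨le_rfl, hpq⟩, rfl⟩)
  rintro _ ⟨n, ⟨hpn, hnq⟩, rfl⟩
  rw [hf.neighborSet_inter, insert_subset_iff, singleton_subset_iff]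
  constructor
  · rcases hpn.eq_or_lt with rfl | h
    · exact ⟨q - 1, ⟨by omega, by omega⟩, hpred⟩
    · exact ⟨n - 1, ⟨by omega, by omega⟩, rfl⟩
  · rcases (Int.add_one_le_iff.mpr hnq).eq_or_lt with h | h
    · exact ⟨p, ⟨le_rfl, hpq⟩, by rw [hp, h]⟩
    · exact ⟨n + 1, ⟨by omega, h⟩, rfl⟩

theorem IsLineIn.finite_range_of_not_injective
    (h2 : ∀ v ∈ S, (G.neighborSet v ∩ S).ncard = 2) (hf : G.IsLineIn S f)
    (hinj : ¬ Injective f) : (range f).Finite := by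
  suffices h : ∀ (d : ℕ) (p : ℤ), f p = f (p + (d + 1)) → (range f).Finite by
    obtain ⟨p, q, hpq, hne⟩ := not_injective_iff.mp hinj
    rcases hne.lt_or_gt with hlt | hlt
    · exact h (q - p - 1).toNat p (by rw [hpq]; congr 1; omega)
    · exact h (p - q - 1).toNat q (by rw [← hpq]; congr 1; omega)
  -- Induction on the length `d + 1` of a repetition `f p = f q`: the neighbour `f (q - 1)` of
  -- `f q = f p` is `f (p - 1)` or `f (p + 1)`, and in the latter case `f (p + 1) = f (q - 1)` is
  -- a shorter repetition (or, when `d ≤ 1`, contradicts `f p ≠ f (p + 1)`, `f p ≠ f (p + 2)`).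
  intro d
  induction d using Nat.strong_induction_on with
  | _ d ih =>
  intro p hp
  set q := p + (d + 1) with hq
  have hpred : f (q - 1) ∈ ({f (p - 1), f (p + 1)} : Set V) := by
    rw [← hf.neighborSet_inter, hp]
    exact hf.pred_mem q
  rcases hpred with hpred | hpred
  · exact hf.finite_range_of_eq_of_pred_eq (by omega) hp hpred
  · rcases (show d = 0 ∨ d = 1 ∨ 2 ≤ d by omega) with rfl | rfl | hd
    · exact (G.loopless.irrefl _ (hp ▸ (hf.succ_mem p).1)).elim
    · refine (hf.pred_ne_succ h2 (p + 1) ?_).elim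
      rw [add_sub_cancel_right, hp, hq]
      congr 1
      push_cast
      ring
    · refine ih (d - 2) (by omega) (p + 1) ?_
      rw [← hpred]
      congr 1
      omega

end Line

section Caterpillar

variable {v w : V} {f : ℤ → V}

def leaves (G : SimpleGraph V) : Set V := {v | (G.neighborSet v).ncard = 1}

def spine (G : SimpleGraph V) : Set V := {v | (G.neighborSet v).ncard = 3}

open Classical in
noncomputable def leg (G : SimpleGraph V) (v : V) : V :=
  if h : ∃ w, G.neighborSet v ∩ G.leaves = {w} then h.choose else v

theorem disjoint_leaves_spine : Disjoint G.leaves G.spine :=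
  Set.disjoint_left.mpr fun v (h1 : (G.neighborSet v).ncard = 1)
    (h3 : (G.neighborSet v).ncard = 3) => by omega

theorem neighborSet_eq_singleton_of_mem_leaves (hv : v ∈ G.leaves) (hw : G.Adj v w) :
    G.neighborSet v = {w} := by
  obtain ⟨z, hz⟩ := ncard_eq_one.mp hv
  have hwz : w ∈ ({z} : Set V) := hz ▸ hw
  rw [hz, mem_singleton_iff.mp hwz]

theorem neighborSet_inter_leaves_eq_leg
    (h31 : ∀ v ∈ G.spine, (G.neighborSet v ∩ G.leaves).ncard = 1) (hv : v ∈ G.spine) :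
    G.neighborSet v ∩ G.leaves = {G.leg v} := by
  have h := ncard_eq_one.mp (h31 v hv)
  rw [leg, dif_pos h]
  exact h.choose_spec

theorem leg_mem (h31 : ∀ v ∈ G.spine, (G.neighborSet v ∩ G.leaves).ncard = 1)
    (hv : v ∈ G.spine) : G.leg v ∈ G.neighborSet v ∩ G.leaves := by
  rw [neighborSet_inter_leaves_eq_leg h31 hv]
  rfl

theorem adj_leg_iff (h31 : ∀ v ∈ G.spine, (G.neighborSet v ∩ G.leaves).ncard = 1)
    (hv : v ∈ G.spine) : G.Adj (G.leg v) w ↔ w = v := by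
  rw [← mem_neighborSet, neighborSet_eq_singleton_of_mem_leaves (leg_mem h31 hv).2
    (leg_mem h31 hv).1.symm, mem_singleton_iff]

theorem ncard_neighborSet_inter_spine (hdeg : ∀ v, v ∈ G.leaves ∨ v ∈ G.spine)
    (h31 : ∀ v ∈ G.spine, (G.neighborSet v ∩ G.leaves).ncard = 1) (hv : v ∈ G.spine) :
    (G.neighborSet v ∩ G.spine).ncard = 2 := by
  have hsplit : G.neighborSet v \ G.leaves = G.neighborSet v ∩ G.spine := by
    ext w
    have hdisj : w ∈ G.leaves → w ∉ G.spine := fun h => Set.disjoint_left.mp disjoint_leaves_spine h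
    have hw := hdeg w
    simp only [mem_sdiff, mem_inter_iff]
    tauto
  have hsum := ncard_inter_add_ncard_sdiff_eq_ncard (G.neighborSet v) G.leaves
    (finite_of_ncard_ne_zero (by rw [show (G.neighborSet v).ncard = 3 from hv]; simp))
  rw [h31 v hv, hsplit, show (G.neighborSet v).ncard = 3 from hv] at hsum
  omega

theorem mem_spine_of_adj_mem_leaves [Infinite V] (hconn : G.Connected)
    (hdeg : ∀ v, v ∈ G.leaves ∨ v ∈ G.spine) (hv : v ∈ G.leaves) (hvw : G.Adj v w) :
    w ∈ G.spine := by
  refine (hdeg w).resolve_left fun hw => ?_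
  have hvw' := neighborSet_eq_singleton_of_mem_leaves hv hvw
  have hwv' := neighborSet_eq_singleton_of_mem_leaves hw hvw.symm
  have hclosed : {v, w} = univ := by
    refine hconn.eq_univ_of_adj_mem ?_ ⟨v, mem_insert _ _⟩
    rintro x y hxy (rfl | rfl)
    · rw [← mem_neighborSet, hvw'] at hxy
      exact Or.inr hxy
    · rw [← mem_neighborSet, hwv'] at hxy
      exact Or.inl hxy
  exact infinite_univ (hclosed ▸ toFinite {v, w})

theorem spine_nonempty [Infinite V] (hconn : G.Connected)
    (hdeg : ∀ v, v ∈ G.leaves ∨ v ∈ G.spine) : G.spine.Nonempty := by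
  obtain ⟨v⟩ := hconn.nonempty
  rcases hdeg v with hv | hv
  · obtain ⟨w, hw⟩ := nonempty_of_ncard_ne_zero (s := G.neighborSet v)
      (by rw [show (G.neighborSet v).ncard = 1 from hv]; simp)
    exact ⟨w, mem_spine_of_adj_mem_leaves hconn hdeg hv hw⟩
  · exact ⟨v, hv⟩

theorem IsLineIn.range_union_image_leg_eq_univ (hconn : G.Connected)
    (hdeg : ∀ v, v ∈ G.leaves ∨ v ∈ G.spine)
    (h31 : ∀ v ∈ G.spine, (G.neighborSet v ∩ G.leaves).ncard = 1)
    (hf : G.IsLineIn G.spine f) : range f ∪ G.leg '' range f = univ := by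
  refine hconn.eq_univ_of_adj_mem ?_ ⟨f 0, Or.inl ⟨0, rfl⟩⟩
  rintro x y hxy (⟨n, rfl⟩ | ⟨_, ⟨n, rfl⟩, rfl⟩)
  · rcases hdeg y with hy | hy
    · have hy' : y ∈ G.neighborSet (f n) ∩ G.leaves := ⟨hxy, hy⟩
      rw [neighborSet_inter_leaves_eq_leg h31 (hf.mem n)] at hy'
      exact Or.inr ⟨f n, ⟨n, rfl⟩, hy'.symm⟩
    · have hy' : y ∈ G.neighborSet (f n) ∩ G.spine := ⟨hxy, hy⟩
      rw [hf.neighborSet_inter] at hy'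
      rcases hy' with rfl | rfl
      exacts [Or.inl ⟨_, rfl⟩, Or.inl ⟨_, rfl⟩]
  · exact Or.inl ⟨n, ((adj_leg_iff h31 (hf.mem n)).mp hxy).symm⟩

noncomputable def caterpillarMap (G : SimpleGraph V) (f : ℤ → V) (p : ℤ × Fin 2) : V :=
  ![f p.1, G.leg (f p.1)] p.2

theorem IsLineIn.nonempty_iso_caterpillar
    (h31 : ∀ v ∈ G.spine, (G.neighborSet v ∩ G.leaves).ncard = 1) (hf : G.IsLineIn G.spine f)
    (hinj : Injective f)
    (hcover : range f ∪ G.leg '' range f = univ) : Nonempty (G ≃g caterpillar) := by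
  have hleg_ne (m n : ℤ) : G.leg (f n) ≠ f m := fun h =>
    Set.disjoint_left.mp disjoint_leaves_spine (leg_mem h31 (hf.mem n)).2 (h ▸ hf.mem m)
  have hleg_inj (m n : ℤ) (h : G.leg (f m) = G.leg (f n)) : m = n :=
    hinj ((adj_leg_iff h31 (hf.mem n)).mp (h ▸ (leg_mem h31 (hf.mem m)).1.symm))
  have hsurj : Surjective (G.caterpillarMap f) := by
    intro v
    rcases hcover.symm ▸ mem_univ v with ⟨n, rfl⟩ | ⟨_, ⟨n, rfl⟩, rfl⟩
    exacts [⟨(n, 0), rfl⟩, ⟨(n, 1), rfl⟩]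
  have hinj' : Injective (G.caterpillarMap f) := by
    rintro ⟨m, i⟩ ⟨n, j⟩ h
    fin_cases i <;> fin_cases j <;> simp [caterpillarMap] at h
    · rw [hinj h]
    · exact (hleg_ne m n h.symm).elim
    · exact (hleg_ne n m h).elim
    · rw [hleg_inj m n h]
  have hadj (x y : ℤ × Fin 2) :
      G.Adj (G.caterpillarMap f x) (G.caterpillarMap f y) ↔ caterpillar.Adj x y := by
    obtain ⟨m, i⟩ := x
    obtain ⟨n, j⟩ := y
    fin_cases i <;> fin_cases j <;>
      simp [caterpillarMap, caterpillar, hf.adj_iff hinj, adj_leg_iff h31 (hf.mem _),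
        G.adj_comm (f _) (G.leg _), hinj.eq_iff, hleg_ne, eq_comm]
  exact ⟨(RelIso.mk (Equiv.ofBijective _ ⟨hinj', hsurj⟩) (hadj _ _)).symm⟩

end Caterpillar

end SimpleGraph

/-- An infinite connected graph whose vertices all have degree 1 or 3, such that every
degree-3 vertex is adjacent to exactly one degree-1 vertex, is isomorphic to the
caterpillar graph. -/
theorem iso_caterpillar_of_degrees {V : Type*} [Infinite V] (G : SimpleGraph V)
    (hconn : G.Connected)
    (hdeg : ∀ v, (G.neighborSet v).ncard = 1 ∨ (G.neighborSet v).ncard = 3)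
    (h31 : ∀ v, (G.neighborSet v).ncard = 3 →
      {w | G.Adj v w ∧ (G.neighborSet w).ncard = 1}.ncard = 1) :
    Nonempty (G ≃g caterpillar) := by
  have h2 (v : V) (hv : v ∈ G.spine) : (G.neighborSet v ∩ G.spine).ncard = 2 :=
    ncard_neighborSet_inter_spine hdeg h31 hv
  obtain ⟨f, hf⟩ := exists_isLineIn h2 (spine_nonempty hconn hdeg)
  have hcover := hf.range_union_image_leg_eq_univ hconn hdeg h31
  have hinj : Injective f := by
    by_contra hinj
    have hfin := hf.finite_range_of_not_injective h2 hinj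
    exact infinite_univ (hcover ▸ hfin.union (hfin.image G.leg))
  exact hf.nonempty_iso_caterpillar h31 hinj hcover
end

section
/- For every nonempty finite set X of vertices of the caterpillar graph L, there exists a locally injective simplicial map f : X → V(L) of the induced subgraph on X into L such that no graph automorphism φ of L satisfies φ(x) = f(x) for all x ∈ X. In other words, the caterpillar graph L has no finite rigid sets. -/
open SimpleGraph

/-!
If `a ∈ X` and `b` have the same neighbours in `X` (apart from each other), then the
transposition of `a` and `b` is a simplicial and injective map on `X`. Let `M` be the largest
first coordinate occurring in `X`. If the leg `(M, 1)` lies in `X`, it is such a twin of the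
spine vertex `(M + 1, 0)`; otherwise `(M, 0) ∈ X` is a twin of the leg `(M - 1, 1)`. Either
way the transposition exchanges a spine vertex with a leg, which no automorphism does: spine
vertices have two distinct neighbours, legs only one.
-/

namespace SimpleGraph

variable {V : Type*} (G : SimpleGraph V)

def IsTwinOn (X : Set V) (a b : V) : Prop :=
  ∀ u ∈ X, u ≠ a → u ≠ b → (G.Adj a u ↔ G.Adj b u)

variable {G} [DecidableEq V]

theorem IsTwinOn.adj_swap {X : Set V} {a b : V} (hab : G.IsTwinOn X a b) :
    ∀ u ∈ X, ∀ v ∈ X, G.Adj u v → G.Adj (Equiv.swap a b u) (Equiv.swap a b v) := by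
  have moved : ∀ u v, v ∈ X → v ≠ a → v ≠ b → G.Adj u v → G.Adj (Equiv.swap a b u) v := by
    intro u v hv hva hvb huv
    rcases eq_or_ne u a with rfl | hua
    · simpa using (hab v hv hva hvb).1 huv
    rcases eq_or_ne u b with rfl | hub
    · simpa using (hab v hv hva hvb).2 huv
    rwa [Equiv.swap_apply_of_ne_of_ne hua hub]
  intro u hu v hv huv
  by_cases hv' : v ≠ a ∧ v ≠ b
  · rw [Equiv.swap_apply_of_ne_of_ne hv'.1 hv'.2]
    exact moved u v hv hv'.1 hv'.2 huv
  by_cases hu' : u ≠ a ∧ u ≠ b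
  · rw [Equiv.swap_apply_of_ne_of_ne hu'.1 hu'.2]
    exact (moved v u hu hu'.1 hu'.2 huv.symm).symm
  obtain ⟨rfl | rfl, rfl | rfl⟩ : (u = a ∨ u = b) ∧ (v = a ∨ v = b) := by tauto
  all_goals first | exact absurd huv (G.irrefl) | simpa using huv.symm

end SimpleGraph

open SimpleGraph

theorem caterpillar_adj_leg_iff {k : ℤ} {q : ℤ × Fin 2} :
    caterpillar.Adj (k, 1) q ↔ q = (k, 0) := by
  obtain ⟨n, i⟩ := q
  fin_cases i <;> simp [caterpillar, eq_comm]

theorem caterpillar_adj_spine_iff {m : ℤ} {q : ℤ × Fin 2} :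
    caterpillar.Adj (m, 0) q ↔ q = (m - 1, 0) ∨ q = (m + 1, 0) ∨ q = (m, 1) := by
  obtain ⟨n, i⟩ := q
  fin_cases i
  · simp [caterpillar, abs_eq, eq_comm]; omega
  · simp [caterpillar, eq_comm]

theorem caterpillar_iso_apply_snd (φ : caterpillar ≃g caterpillar) (p : ℤ × Fin 2) :
    (φ p).2 = p.2 := by
  have spine : ∀ ψ : caterpillar ≃g caterpillar, ∀ n, (ψ (n, 0)).2 = 0 := by
    intro ψ n
    by_contra hleg
    -- a leg has a single neighbour, while `ψ (n, 0)` has the two neighbours `ψ (n ± 1, 0)`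
    have hk : ψ (n, 0) = ((ψ (n, 0)).1, 1) := Prod.ext rfl (Fin.eq_one_of_ne_zero _ hleg)
    have h₁ := ψ.map_adj_iff.2 ((caterpillar_adj_spine_iff (m := n)).2 (Or.inl rfl))
    have h₂ := ψ.map_adj_iff.2 ((caterpillar_adj_spine_iff (m := n)).2 (Or.inr (Or.inl rfl)))
    rw [hk, caterpillar_adj_leg_iff] at h₁ h₂
    have : n - 1 = n + 1 := by simpa using ψ.injective (h₁.trans h₂.symm)
    omega
  obtain ⟨n, i⟩ := p
  fin_cases i
  · exact spine φ n
  · refine Fin.eq_one_of_ne_zero _ fun hspine => ?_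
    have hk : φ (n, 1) = ((φ (n, 1)).1, 0) := Prod.ext rfl hspine
    simpa [← hk] using spine φ.symm (φ (n, 1)).1

theorem caterpillar_exists_isTwinOn {X : Finset (ℤ × Fin 2)} (hX : X.Nonempty) :
    ∃ a ∈ X, ∃ b : ℤ × Fin 2, a.2 ≠ b.2 ∧ caterpillar.IsTwinOn X a b := by
  obtain ⟨⟨M, i⟩, hp, hpM⟩ := X.exists_mem_eq_sup' hX Prod.fst
  have hle : ∀ u ∈ X, u.1 ≤ M := fun u hu => (X.le_sup' Prod.fst hu).trans_eq hpM
  by_cases hleg : (M, 1) ∈ X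
  · refine ⟨(M, 1), hleg, (M + 1, 0), one_ne_zero, fun u hu _ _ => ?_⟩
    have hu_le := hle u hu
    rw [caterpillar_adj_leg_iff, caterpillar_adj_spine_iff]
    obtain ⟨n, i⟩ := u
    fin_cases i <;> simp at hu_le ⊢ <;> omega
  · have hspine : (M, 0) ∈ X := by
      fin_cases i
      · exact hp
      · exact absurd hp hleg
    refine ⟨(M, 0), hspine, (M - 1, 1), zero_ne_one, fun u hu _ _ => ?_⟩
    have hu_le := hle u hu
    have hu₁ : u ≠ (M, 1) := fun h => hleg (h ▸ hu)
    rw [caterpillar_adj_leg_iff, caterpillar_adj_spine_iff]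
    obtain ⟨n, i⟩ := u
    fin_cases i <;> simp at hu_le hu₁ ⊢ <;> omega

/-- The caterpillar graph has no finite rigid sets: for every nonempty finite set `X` of
vertices there is a locally injective simplicial map of the induced subgraph on `X` into
the caterpillar which is not the restriction of any automorphism. -/
theorem caterpillar_no_finite_rigid_sets :
    ∀ X : Finset (ℤ × Fin 2), X.Nonempty →
      ∃ f : ℤ × Fin 2 → ℤ × Fin 2,
        (∀ u ∈ X, ∀ v ∈ X, caterpillar.Adj u v → caterpillar.Adj (f u) (f v)) ∧
        (∀ v ∈ X, ∀ u ∈ X, ∀ w ∈ X,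
          (u = v ∨ caterpillar.Adj v u) → (w = v ∨ caterpillar.Adj v w) →
          f u = f w → u = w) ∧
        (∀ φ : caterpillar ≃g caterpillar, ∃ x ∈ X, φ x ≠ f x) := by
  intro X hX
  obtain ⟨a, ha, b, hab, htwin⟩ := caterpillar_exists_isTwinOn hX
  refine ⟨Equiv.swap a b, htwin.adj_swap, fun _ _ _ _ _ _ _ _ h => (Equiv.swap a b).injective h,
    fun φ => ⟨a, ha, fun h => hab ?_⟩⟩
  rw [← caterpillar_iso_apply_snd φ a, h, Equiv.swap_apply_left]
end
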